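/- Suppose xi = u_{i_m} wedge u_{i_{m-1}} wedge ... and eta = u_{j_m} wedge u_{j_{m-1}} wedge ... index top and bottom boundary conditions of a one-row Delta ice system, and there exists an admissible state. Then the sequences interleave: i_m >= j_m >= i_{m-1} >= j_{m-1} >= ... . -/

import Mathlib

/-! Delta ice conserves lines: at every admissible vertex the `-` spins on the right and bottom
edges balance those on the left and top edges, counted as `0/1`.  Summing this from the far left,
where every spin is `+`, the edge left of column `k` carries `-` exactly when `T k - B k = 1`,
and otherwise `T k = B k`, where `T k` and `B k` count the top and bottom `-` spins in columns
`> k`.  At `k = i_r` one has `T k = m - r`, while `j_r > i_r` would force `B k ≥ m - r + 1`; at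
`k = j_r` one has `B k = m - r`, while `i_{r-1} > j_r` would force `T k ≥ m - r + 2`. -/

open Set

lemma deltaIce_conservation {l t b r : Bool} (hparity : xor (xor l t) (xor b r) = false)
    (hlegal : ¬(l = false ∧ t = false ∧ b = true) ∧ ¬(l = true ∧ t = true ∧ b = false)) :
    r.toNat + b.toNat = l.toNat + t.toNat := by
  revert hparity hlegal
  cases l <;> cases t <;> cases b <;> cases r <;> decide

noncomputable def countAbove (f : ℤ → Bool) (k : ℤ) : ℕ := {c | k < c ∧ f c = true}.ncard

section countAbove

variable {f : ℤ → Bool}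

lemma finite_setOf_lt_and (hf : BddAbove {c | f c = true}) (k : ℤ) :
    {c | k < c ∧ f c = true}.Finite := by
  obtain ⟨M, hM⟩ := hf
  exact (finite_Ioc k M).subset fun c hc => ⟨hc.1, hM hc.2⟩

lemma countAbove_eq_zero {M k : ℤ} (hM : M ∈ upperBounds {c | f c = true}) (hk : M ≤ k) :
    countAbove f k = 0 := by
  rw [countAbove, ncard_eq_zero (finite_setOf_lt_and ⟨M, hM⟩ k)]
  exact eq_empty_of_forall_notMem fun c hc => by have := hM hc.2; have := hc.1; omega

lemma countAbove_sub_one (hf : BddAbove {c | f c = true}) (k : ℤ) :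
    countAbove f (k - 1) = countAbove f k + (f k).toNat := by
  cases hk : f k
  · simp only [countAbove, Bool.toNat_false, add_zero]
    congr 1
    ext c
    simp only [mem_ofPred_eq]
    constructor
    · rintro ⟨hc, hfc⟩
      exact ⟨lt_of_le_of_ne (by omega) (by rintro rfl; simp_all), hfc⟩
    · rintro ⟨hc, hfc⟩
      exact ⟨by omega, hfc⟩
  · have : {c | k - 1 < c ∧ f c = true} = insert k {c | k < c ∧ f c = true} := by
      ext c
      simp only [mem_ofPred_eq, mem_insert_iff]
      constructor
      · rintro ⟨hc, hfc⟩
        rcases eq_or_lt_of_le (show k ≤ c by omega) with rfl | hkc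
        exacts [Or.inl rfl, Or.inr ⟨hkc, hfc⟩]
      · rintro (rfl | ⟨hc, hfc⟩)
        exacts [⟨by omega, hk⟩, ⟨by omega, hfc⟩]
    rw [countAbove, this, ncard_insert_of_notMem (by simp) (finite_setOf_lt_and hf k)]
    rfl

end countAbove

theorem toNat_add_countAbove_eq {L t b : ℤ → Bool} (hL : BddAbove {c | L c = true})
    (ht : BddAbove {c | t c = true}) (hb : BddAbove {c | b c = true})
    (hcons : ∀ k, (L (k - 1)).toNat + (b k).toNat = (L k).toNat + (t k).toNat) (k : ℤ) :
    (L k).toNat + countAbove b k = countAbove t k := by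
  obtain ⟨M, hM⟩ := hL.union (ht.union hb)
  have hML : M ∈ upperBounds {c | L c = true} := fun c hc => hM (Or.inl hc)
  have hMt : M ∈ upperBounds {c | t c = true} := fun c hc => hM (Or.inr (Or.inl hc))
  have hMb : M ∈ upperBounds {c | b c = true} := fun c hc => hM (Or.inr (Or.inr hc))
  have hfar : ∀ k, M < k → (L k).toNat + countAbove b k = countAbove t k := fun k hk => by
    have : L k = false := by
      by_contra h
      have := hML (Bool.eq_true_of_not_eq_false h)
      omega
    rw [this, countAbove_eq_zero hMb hk.le, countAbove_eq_zero hMt hk.le]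
    rfl
  rcases lt_or_ge M k with hk | hk
  · exact hfar k hk
  replace hk : k ≤ M + 1 := by omega
  induction k, hk using Int.leInductionDown with
  | base => exact hfar (M + 1) (Int.lt_add_one_iff.2 le_rfl)
  | pred n _ ih =>
    have := hcons n
    rw [countAbove_sub_one hb, countAbove_sub_one ht]
    omega

section StrictMonoOn

variable {m : ℤ} {i : ℤ → ℤ} {top : ℤ → Bool}

lemma bddAbove_of_strictMonoOn (hi : StrictMonoOn i (Iic m))
    (htop : ∀ k, top k = true ↔ ∃ r ≤ m, i r = k) : BddAbove {c | top c = true} := by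
  refine ⟨i m, fun c hc => ?_⟩
  obtain ⟨r, hr, rfl⟩ := (htop c).1 hc
  exact hi.monotoneOn hr self_mem_Iic hr

lemma image_Ioc_eq_of_strictMonoOn (hi : StrictMonoOn i (Iic m))
    (htop : ∀ k, top k = true ↔ ∃ r ≤ m, i r = k) {r : ℤ} (hr : r ≤ m) :
    i '' Ioc r m = {c | i r < c ∧ top c = true} := by
  ext c
  simp only [mem_image, mem_Ioc, mem_ofPred_eq, htop]
  constructor
  · rintro ⟨s, ⟨hrs, hsm⟩, rfl⟩
    exact ⟨hi hr hsm hrs, s, hsm, rfl⟩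
  · rintro ⟨hc, s, hsm, rfl⟩
    exact ⟨s, ⟨(hi.lt_iff_lt hr hsm).1 hc, hsm⟩, rfl⟩

lemma countAbove_apply_of_strictMonoOn (hi : StrictMonoOn i (Iic m))
    (htop : ∀ k, top k = true ↔ ∃ r ≤ m, i r = k) {r : ℤ} (hr : r ≤ m) :
    countAbove top (i r) = (m - r).toNat := by
  rw [countAbove, ← image_Ioc_eq_of_strictMonoOn hi htop hr,
    (hi.injOn.mono fun s hs => mem_Iic.2 hs.2).ncard_image, ← Finset.coe_Ioc,
    ncard_coe_finset, Int.card_Ioc]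

lemma le_countAbove_of_strictMonoOn (hi : StrictMonoOn i (Iic m))
    (htop : ∀ k, top k = true ↔ ∃ r ≤ m, i r = k) {r k : ℤ} (hr : r ≤ m) (hk : k < i r) :
    (m + 1 - r).toNat ≤ countAbove top k := by
  have hsub : i '' Icc r m ⊆ {c | k < c ∧ top c = true} := by
    rintro _ ⟨s, ⟨hrs, hsm⟩, rfl⟩
    exact ⟨hk.trans_le (hi.monotoneOn hr hsm hrs), (htop _).2 ⟨s, hsm, rfl⟩⟩
  calc (m + 1 - r).toNat = (i '' Icc r m).ncard := by
        rw [(hi.injOn.mono fun s hs => mem_Iic.2 hs.2).ncard_image, ← Finset.coe_Icc,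
          ncard_coe_finset, Int.card_Icc]
    _ ≤ countAbove top k :=
        ncard_le_ncard hsub (finite_setOf_lt_and (bddAbove_of_strictMonoOn hi htop) k)

end StrictMonoOn

theorem stmt_17_general (m : ℤ) (i j : ℤ → ℤ)
    (hi : ∀ r r' : ℤ, r < r' → r' ≤ m → i r < i r')
    (hj : ∀ r r' : ℤ, r < r' → r' ≤ m → j r < j r')
    (top bottom L : ℤ → Bool)
    (htop : ∀ k : ℤ, top k = true ↔ ∃ r ≤ m, i r = k)
    (hbot : ∀ k : ℤ, bottom k = true ↔ ∃ r ≤ m, j r = k)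
    (hLfin : Set.Finite {k : ℤ | L k = true})
    (hparity : ∀ k : ℤ, xor (xor (L k) (top k)) (xor (bottom k) (L (k - 1))) = false)
    (hlegal : ∀ k : ℤ,
        ¬(L k = false ∧ top k = false ∧ bottom k = true) ∧
        ¬(L k = true ∧ top k = true ∧ bottom k = false)) :
    ∀ r ≤ m, j r ≤ i r ∧ i (r - 1) ≤ j r := by
  have hi' : StrictMonoOn i (Iic m) := fun a _ b hb hab => hi a b hab hb
  have hj' : StrictMonoOn j (Iic m) := fun a _ b hb hab => hj a b hab hb
  have hcount := toNat_add_countAbove_eq hLfin.bddAbove (bddAbove_of_strictMonoOn hi' htop)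
    (bddAbove_of_strictMonoOn hj' hbot) fun k => deltaIce_conservation (hparity k) (hlegal k)
  intro r hr
  constructor
  · by_contra! h
    have hT := countAbove_apply_of_strictMonoOn hi' htop hr
    have hB := le_countAbove_of_strictMonoOn hj' hbot hr h
    have := hcount (i r)
    omega
  · by_contra! h
    have hB := countAbove_apply_of_strictMonoOn hj' hbot hr
    have hT := le_countAbove_of_strictMonoOn hi' htop (show r - 1 ≤ m by omega) h
    have := hcount (j r)
    have := Bool.toNat_le (L (j r))
    omega

/-- interleaving for one-row Delta ice.  Columns are indexed by `ℤ`
(decreasing from left to right).  The top boundary carries a `-` spin exactly in the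
columns `i_m > i_{m-1} > ⋯` and the bottom boundary exactly in the columns
`j_m > j_{m-1} > ⋯` (both sequences satisfying `i_r = j_r = r` for `r ≪ 0`).  A state
assigns to each horizontal edge a spin; `L k = true` means the edge between columns
`k+1` and `k` (the edge to the left of column `k`) carries `-`, and only finitely many
horizontal edges carry `-`.  At each column `k` the four adjacent edges
`(L k, top k, bottom k, L (k-1))` must carry an even number of `-` spins, and the two
illegal Delta-ice vertex configurations `(+,+,-,-)` and `(-,-,+,+)` are excluded.
Then the boundary sequences interleave: `i_m ≥ j_m ≥ i_{m-1} ≥ j_{m-1} ≥ ⋯`. -/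
theorem stmt_17 (m : ℤ) (i j : ℤ → ℤ)
    (hi : ∀ r r' : ℤ, r < r' → r' ≤ m → i r < i r')
    (hj : ∀ r r' : ℤ, r < r' → r' ≤ m → j r < j r')
    (hieq : ∃ N : ℤ, ∀ r ≤ N, i r = r) (hjeq : ∃ N : ℤ, ∀ r ≤ N, j r = r)
    (top bottom L : ℤ → Bool)
    (htop : ∀ k : ℤ, top k = true ↔ ∃ r ≤ m, i r = k)
    (hbot : ∀ k : ℤ, bottom k = true ↔ ∃ r ≤ m, j r = k)
    (hLfin : Set.Finite {k : ℤ | L k = true})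
    (hparity : ∀ k : ℤ, xor (xor (L k) (top k)) (xor (bottom k) (L (k - 1))) = false)
    (hlegal : ∀ k : ℤ,
        ¬(L k = false ∧ top k = false ∧ bottom k = true) ∧
        ¬(L k = true ∧ top k = true ∧ bottom k = false)) :
    ∀ r ≤ m, j r ≤ i r ∧ i (r - 1) ≤ j r :=
  stmt_17_general m i j hi hj top bottom L htop hbot hLfin hparity hlegal
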